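/- For a sos form f of degree 2d, the set U_f of degree-d forms p such that f - c·p^2 is sos for some real c > 0 is a linear subspace of R[x]_d. -/

import Mathlib

open MvPolynomial Finsupp

/-- `f` is a sum of squares of forms of degree `d` in `n` variables. -/
def IsSOSForm (n d : ℕ) (f : MvPolynomial (Fin n) ℝ) : Prop :=
  ∃ (N : ℕ) (g : Fin N → MvPolynomial (Fin n) ℝ),
    (∀ i, (g i).IsHomogeneous d) ∧ f = ∑ i, (g i) ^ 2

/-- The cone `Σ_{2d}` of sums of squares of degree-`d` forms, as a subset of the
finite-dimensional real vector space `R[x]_{2d}` of forms of degree `2d`. -/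
def SigmaCone (n d : ℕ) : Set (homogeneousSubmodule (Fin n) ℝ (2 * d)) :=
  {f | IsSOSForm n d (f : MvPolynomial (Fin n) ℝ)}

/-- The canonical topology on the finite-dimensional real vector space of forms. -/
noncomputable instance (n d : ℕ) : TopologicalSpace (homogeneousSubmodule (Fin n) ℝ d) :=
  moduleTopology ℝ _

/-- A form is positive definite if it is positive away from the origin. -/
def PosDefForm (n : ℕ) (f : MvPolynomial (Fin n) ℝ) : Prop :=
  ∀ x : Fin n → ℝ, x ≠ 0 → 0 < eval x f

/-- For a sos form `f` of degree `2d`, the set `U_f` of forms `p` of degree `d`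
such that `f - c p ^ 2` is sos for some `c > 0`. -/
def Uset (n d : ℕ) (f : MvPolynomial (Fin n) ℝ) : Set (MvPolynomial (Fin n) ℝ) :=
  {p | p.IsHomogeneous d ∧ ∃ c : ℝ, 0 < c ∧ IsSOSForm n d (f - c • p ^ 2)}

/-!
The only identity needed is the parallelogram law: for `c > 0`,
`f - (c/4)(p + q)² = ½(f - c p²) + ½(f - c q²) + (c/4)(p - q)²`.
Since membership of `p` in `U_f` is witnessed by any smaller constant as well
(`f - c' p² = (f - c p²) + (c - c') p²`), two members can be given a common constant
`c = min c₁ c₂`, and the identity shows `p + q ∈ U_f`; scaling `p` by `t` is absorbed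
by the constant `c / (1 + t²)`.
-/

namespace IsSOSForm

variable {n d : ℕ} {f g p : MvPolynomial (Fin n) ℝ}

lemma add (hf : IsSOSForm n d f) (hg : IsSOSForm n d g) : IsSOSForm n d (f + g) := by
  obtain ⟨N, u, hu, rfl⟩ := hf
  obtain ⟨M, v, hv, rfl⟩ := hg
  refine ⟨N + M, Fin.append u v, Fin.addCases (by simpa using hu) (by simpa using hv), ?_⟩
  simp [Fin.sum_univ_add]

lemma smul_of_nonneg (hf : IsSOSForm n d f) {c : ℝ} (hc : 0 ≤ c) : IsSOSForm n d (c • f) := by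
  obtain ⟨N, u, hu, rfl⟩ := hf
  refine ⟨N, fun i => √c • u i, fun i => by simpa only [smul_eq_C_mul] using (hu i).C_mul √c, ?_⟩
  simp only [Finset.smul_sum, smul_pow, Real.sq_sqrt hc]

lemma sq (hp : p.IsHomogeneous d) : IsSOSForm n d (p ^ 2) :=
  ⟨1, fun _ => p, fun _ => hp, by simp⟩

lemma sub_smul_sq_of_le {c c' : ℝ} (h : IsSOSForm n d (f - c • p ^ 2))
    (hp : p.IsHomogeneous d) (hc : c' ≤ c) : IsSOSForm n d (f - c' • p ^ 2) := by
  have hsplit : f - c' • p ^ 2 = (f - c • p ^ 2) + (c - c') • p ^ 2 := by module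
  rw [hsplit]
  exact h.add ((sq hp).smul_of_nonneg (sub_nonneg.2 hc))

end IsSOSForm

lemma sub_smul_add_sq_eq {R : Type*} [CommRing R] [Algebra ℝ R] (f p q : R) (c : ℝ) :
    f - (c / 4) • (p + q) ^ 2
      = (1 / 2 : ℝ) • (f - c • p ^ 2) + (1 / 2 : ℝ) • (f - c • q ^ 2) + (c / 4) • (p - q) ^ 2 := by
  have hplus : (p + q) ^ 2 = p ^ 2 + (2 : ℝ) • (p * q) + q ^ 2 := by rw [two_smul]; ring
  have hminus : (p - q) ^ 2 = p ^ 2 - (2 : ℝ) • (p * q) + q ^ 2 := by rw [two_smul]; ring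
  rw [hplus, hminus]
  module

section Uset

variable {n d : ℕ} {f p q : MvPolynomial (Fin n) ℝ}

lemma zero_mem_Uset (hsos : IsSOSForm n d f) : 0 ∈ Uset n d f :=
  ⟨isHomogeneous_zero _ _ _, 1, one_pos, by simpa using hsos⟩

lemma add_mem_Uset (hp : p ∈ Uset n d f) (hq : q ∈ Uset n d f) : p + q ∈ Uset n d f := by
  obtain ⟨hp, c₁, hc₁, h₁⟩ := hp
  obtain ⟨hq, c₂, hc₂, h₂⟩ := hq
  set c := min c₁ c₂
  have hp' := h₁.sub_smul_sq_of_le hp (min_le_left c₁ c₂)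
  have hq' := h₂.sub_smul_sq_of_le hq (min_le_right c₁ c₂)
  refine ⟨hp.add hq, c / 4, by positivity, ?_⟩
  rw [sub_smul_add_sq_eq]
  exact ((hp'.smul_of_nonneg (by norm_num)).add (hq'.smul_of_nonneg (by norm_num))).add
    ((IsSOSForm.sq (hp.sub hq)).smul_of_nonneg (by positivity))

lemma smul_mem_Uset (t : ℝ) (hp : p ∈ Uset n d f) : t • p ∈ Uset n d f := by
  obtain ⟨hp, c, hc, h⟩ := hp
  have hscale : (c / (1 + t ^ 2)) • (t • p) ^ 2 = (c * t ^ 2 / (1 + t ^ 2)) • p ^ 2 := by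
    rw [smul_pow, smul_smul]; ring_nf
  have hle : c * t ^ 2 / (1 + t ^ 2) ≤ c := by
    rw [div_le_iff₀ (by positivity)]; nlinarith [sq_nonneg t]
  refine ⟨by simpa only [smul_eq_C_mul] using hp.C_mul t, c / (1 + t ^ 2), by positivity, ?_⟩
  rw [hscale]
  exact h.sub_smul_sq_of_le hp hle

end Uset

theorem Uset_is_subspace_general (n d : ℕ) (f : MvPolynomial (Fin n) ℝ)
    (hsos : IsSOSForm n d f) :
    ∃ U : Submodule ℝ (MvPolynomial (Fin n) ℝ), (U : Set (MvPolynomial (Fin n) ℝ)) = Uset n d f :=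
  ⟨{ carrier := Uset n d f
     zero_mem' := zero_mem_Uset hsos
     add_mem' := add_mem_Uset
     smul_mem' := fun t _ => smul_mem_Uset t }, rfl⟩

theorem Uset_is_subspace (n d : ℕ) (f : MvPolynomial (Fin n) ℝ)
    (hf : f.IsHomogeneous (2 * d)) (hsos : IsSOSForm n d f) :
    ∃ U : Submodule ℝ (MvPolynomial (Fin n) ℝ), (U : Set (MvPolynomial (Fin n) ℝ)) = Uset n d f :=
  Uset_is_subspace_general n d f hsos
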